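/- arXiv:2205.10261 — 3 statements merged into one kernel-verified Lean document; each statement's English description precedes it below -/
import Mathlib

section
/- Suppose K̃ : ℝ × ℝ^d → ℂ satisfies the Penrose-type lower bound |1 - K̃(τ,ξ)| ≥ c̊ > 0 everywhere, and for each 1 ≤ i ≤ j the derivative bounds |∇_ξ^i K̃(τ,ξ)| ≤ M ( ⟨ξ⟩^{-i}(|τ|+|ξ|)^{-2} + ⟨ξ⟩^{-2}(|τ|+|ξ|)^{-i} ) (with the improved bound |∇_ξ K̃| ≤ M |ξ| ⟨ξ⟩^{-2}(|τ|+|ξ|)^{-2} for i=1). Then the function G̃ := K̃/(1-K̃) = 1/(1-K̃) - 1 satisfies |∇_ξ^j G̃(τ,ξ)| ≤ C(c̊,j,d) M (1+M)^{j-1} ( ⟨ξ⟩^{-j}(|τ|+|ξ|)^{-2} + ⟨ξ⟩^{-2}(|τ|+|ξ|)^{-j} ) for every j ≥ 1. -/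
/-!
Write `G̃ = (1 - K̃)⁻¹ - 1`. The `k`-th derivative of `z ↦ (1 - z)⁻¹` at `w` is
`k! (1 - w)^{-(k+1)}`, bounded by `j! (1 + c⁻¹)^{j+1}` when `‖1 - w‖ ≥ c` and `k ≤ j`. The
Faà di Bruno bound `‖D^j (g ∘ f)‖ ≤ j! C D^j`, valid as soon as `‖D^i f‖ ≤ D^i` for `1 ≤ i ≤ j`,
therefore reduces the theorem to finding `D` with `D^j ≲ M (1 + M)^{j-1} w_j`, where
`w_i = ⟨ξ⟩^{-i}(|τ|+|ξ|)^{-2} + ⟨ξ⟩^{-2}(|τ|+|ξ|)^{-i}`.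

`D = 2 μ w_j^{1/j}` with `μ = max (M^{1/j}) M` works. Indeed, for `2 ≤ i ≤ j` each summand of
`w_i` is at most `w_j^{i/j}`: raised to the power `j`, this compares monomials in `⟨ξ⟩⁻¹ ≤ 1` and
`(|τ|+|ξ|)⁻¹`, according to whether the latter is `≤ 1` or `≥ 1`. For `i = 1` the improved bound
on `∇K̃` is needed: `|ξ| ⟨ξ⟩^{-2}(|τ|+|ξ|)^{-2} ≤ w_j^{1/j}` because `|ξ|` is at most both
`⟨ξ⟩` and `|τ|+|ξ|`.
-/

open Nat

theorem iteratedFDeriv_sub_const_apply {𝕜 E F : Type*} [NontriviallyNormedField 𝕜]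
    [NormedAddCommGroup E] [NormedSpace 𝕜 E] [NormedAddCommGroup F] [NormedSpace 𝕜 F]
    {f : E → F} {x : E} {n : ℕ} (hn : n ≠ 0) (hf : ContDiffAt 𝕜 n f x) (c : F) :
    iteratedFDeriv 𝕜 n (fun y => f y - c) x = iteratedFDeriv 𝕜 n f x := by
  rw [show (fun y => f y - c) = f - fun _ => c from rfl,
    iteratedFDeriv_sub_apply hf contDiffAt_const, iteratedFDeriv_const_of_ne hn, Pi.zero_apply,
    sub_zero]

section InvOneSub

variable {𝕜 : Type*} [RCLike 𝕜]

theorem norm_iteratedDeriv_inv_one_sub (k : ℕ) (w : 𝕜) :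
    ‖iteratedDeriv k (fun z : 𝕜 => (1 - z)⁻¹) w‖ = k ! * ‖1 - w‖⁻¹ ^ (k + 1) := by
  have h := congr_fun (iter_deriv_inv_linear_sub k (-1 : 𝕜) (-1)) w
  simp only [neg_one_mul, sub_neg_eq_add, neg_add_eq_sub] at h
  rw [iteratedDeriv_eq_iterate, h, norm_mul, norm_mul, norm_mul, norm_zpow, RCLike.norm_natCast,
    norm_pow, norm_neg, norm_one, one_pow, one_mul, mul_one,
    show (-1 - k : ℤ) = -((k + 1 : ℕ) : ℤ) by push_cast; ring, zpow_neg, zpow_natCast, inv_pow]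

theorem norm_iteratedFDeriv_real_inv_one_sub (k : ℕ) {w : 𝕜} (hw : w ≠ 1) :
    ‖iteratedFDeriv ℝ k (fun z : 𝕜 => (1 - z)⁻¹) w‖ = k ! * ‖1 - w‖⁻¹ ^ (k + 1) := by
  have hC : ContDiffAt 𝕜 k (fun z : 𝕜 => (1 - z)⁻¹) w :=
    (contDiffAt_const.sub contDiffAt_id).inv (sub_ne_zero.2 hw.symm)
  rw [← hC.restrictScalars_iteratedFDeriv (𝕜 := ℝ), Function.comp_apply,
    ContinuousMultilinearMap.norm_restrictScalars, norm_iteratedFDeriv_eq_norm_iteratedDeriv,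
    norm_iteratedDeriv_inv_one_sub]

variable {E : Type*} [NormedAddCommGroup E] [NormedSpace ℝ E]

theorem norm_iteratedFDeriv_inv_one_sub_comp_le {f : E → 𝕜} {n : ℕ} (hf : ContDiff ℝ n f)
    (hf1 : ∀ y, f y ≠ 1) {c : ℝ} (hc : 0 < c) {x : E} (hfx : c ≤ ‖1 - f x‖) {D : ℝ}
    (hD : ∀ i, 1 ≤ i → i ≤ n → ‖iteratedFDeriv ℝ i f x‖ ≤ D ^ i) :
    ‖iteratedFDeriv ℝ n (fun y => (1 - f y)⁻¹) x‖
      ≤ n ! * (n ! * (1 + c⁻¹) ^ (n + 1)) * D ^ n := by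
  have hopen : IsOpen {z : 𝕜 | z ≠ 1} := isOpen_ne
  have hg : ContDiffOn ℝ n (fun z : 𝕜 => (1 - z)⁻¹) {z | z ≠ 1} :=
    ((contDiffOn_const.sub (contDiffOn_id (𝕜 := 𝕜))).inv
      fun z hz => sub_ne_zero.2 (Ne.symm hz)).restrict_scalars ℝ
  refine norm_iteratedFDeriv_comp_le' (by rintro _ ⟨y, rfl⟩; exact hf1 y) hopen.uniqueDiffOn
    hg hf le_rfl x (fun i hi => ?_) hD
  rw [iteratedFDerivWithin_of_isOpen i hopen (hf1 x),
    norm_iteratedFDeriv_real_inv_one_sub i (hf1 x)]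
  have hc1 : 1 ≤ 1 + c⁻¹ := le_add_of_nonneg_right (by positivity)
  have hinv : ‖1 - f x‖⁻¹ ≤ 1 + c⁻¹ := (inv_anti₀ hc hfx).trans (le_add_of_nonneg_left zero_le_one)
  gcongr ?_ * ?_
  · exact_mod_cast factorial_le hi
  · calc ‖1 - f x‖⁻¹ ^ (i + 1) ≤ (1 + c⁻¹) ^ (i + 1) := by gcongr
      _ ≤ (1 + c⁻¹) ^ (n + 1) := by gcongr

theorem norm_iteratedFDeriv_div_one_sub_comp_le {f : E → 𝕜} {n : ℕ} (hn : n ≠ 0)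
    (hf : ContDiff ℝ n f) (hf1 : ∀ y, f y ≠ 1) {c : ℝ} (hc : 0 < c) {x : E}
    (hfx : c ≤ ‖1 - f x‖) {D : ℝ} (hD : ∀ i, 1 ≤ i → i ≤ n → ‖iteratedFDeriv ℝ i f x‖ ≤ D ^ i) :
    ‖iteratedFDeriv ℝ n (fun y => f y / (1 - f y)) x‖
      ≤ n ! * (n ! * (1 + c⁻¹) ^ (n + 1)) * D ^ n := by
  have hG : (fun y => f y / (1 - f y)) = fun y => (1 - f y)⁻¹ - 1 := by
    funext y
    field_simp [sub_ne_zero.2 (hf1 y).symm]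
    ring
  rw [hG, iteratedFDeriv_sub_const_apply (f := fun y => (1 - f y)⁻¹) hn
    ((contDiffAt_const.sub hf.contDiffAt).inv (sub_ne_zero.2 (hf1 x).symm))]
  exact norm_iteratedFDeriv_inv_one_sub_comp_le hf hf1 hc hfx hD

end InvOneSub

theorem le_pow_of_pow_le_pow_pow {u β : ℝ} {i j : ℕ} (hu : 0 ≤ u) (hβ : 0 ≤ β) (hj : j ≠ 0)
    (h : u ^ j ≤ (β ^ j) ^ i) : u ≤ β ^ i := by
  rw [← pow_mul, mul_comm, pow_mul] at h
  exact (pow_le_pow_iff_left₀ hu (by positivity) hj).1 h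

theorem exists_le_pow_and_pow_le_mul_one_add_pow {M : ℝ} (hM : 0 ≤ M) {j : ℕ} (hj : j ≠ 0) :
    ∃ μ, 0 ≤ μ ∧ (∀ i, 1 ≤ i → i ≤ j → M ≤ μ ^ i) ∧ μ ^ j ≤ M * (1 + M) ^ (j - 1) := by
  set m := M ^ (j⁻¹ : ℝ)
  have hm0 : 0 ≤ m := by positivity
  have hmj : m ^ j = M := Real.rpow_inv_natCast_pow hM hj
  rcases le_total m 1 with hm1 | hm1
  · refine ⟨m, hm0, fun i _ hij => hmj ▸ pow_le_pow_of_le_one hm0 hm1 hij, ?_⟩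
    rw [hmj]
    exact le_mul_of_one_le_right hM (one_le_pow₀ (by linarith))
  · have hM1 : 1 ≤ M := hmj ▸ one_le_pow₀ hm1
    refine ⟨M, hM, fun i hi _ => le_self_pow₀ hM1 (by omega), ?_⟩
    calc M ^ j = M * M ^ (j - 1) := (mul_pow_sub_one hj M).symm
      _ ≤ M * (1 + M) ^ (j - 1) := by gcongr; linarith

def weight (i : ℕ) (x y : ℝ) : ℝ := x ^ i * y ^ 2 + x ^ 2 * y ^ i

section Weight

variable {x y : ℝ} {i j : ℕ}

theorem weight_inv (i : ℕ) (A s : ℝ) :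
    weight i A⁻¹ s⁻¹ = (A ^ i * s ^ 2)⁻¹ + (A ^ 2 * s ^ i)⁻¹ := by
  simp only [weight, mul_inv, inv_pow]

theorem weight_nonneg (hx : 0 ≤ x) (hy : 0 ≤ y) (i : ℕ) : 0 ≤ weight i x y := by
  unfold weight; positivity

theorem pow_mul_sq_pow_le_weight_pow (hx0 : 0 ≤ x) (hx1 : x ≤ 1) (hy : 0 ≤ y) (h2i : 2 ≤ i)
    (hij : i ≤ j) : (x ^ i * y ^ 2) ^ j ≤ weight j x y ^ i := by
  rw [mul_pow, ← pow_mul, ← pow_mul]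
  rcases le_total y 1 with hy1 | hy1
  · calc x ^ (i * j) * y ^ (2 * j) ≤ x ^ (j * i) * y ^ (2 * i) := by
          rw [mul_comm i j]
          exact mul_le_mul_of_nonneg_left (pow_le_pow_of_le_one hy hy1 (by omega)) (by positivity)
      _ = (x ^ j * y ^ 2) ^ i := by rw [mul_pow, pow_mul, pow_mul]
      _ ≤ weight j x y ^ i := by
          unfold weight; gcongr; exact le_add_of_nonneg_right (by positivity)
  · calc x ^ (i * j) * y ^ (2 * j) ≤ x ^ (2 * i) * y ^ (j * i) :=
          mul_le_mul (pow_le_pow_of_le_one hx0 hx1 (by nlinarith))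
            (pow_le_pow_right₀ hy1 (by nlinarith)) (by positivity) (by positivity)
      _ = (x ^ 2 * y ^ j) ^ i := by rw [mul_pow, pow_mul, pow_mul]
      _ ≤ weight j x y ^ i := by
          unfold weight; gcongr; exact le_add_of_nonneg_left (by positivity)

theorem sq_mul_pow_pow_le_weight_pow (hx0 : 0 ≤ x) (hx1 : x ≤ 1) (hy : 0 ≤ y) (hij : i ≤ j) :
    (x ^ 2 * y ^ i) ^ j ≤ weight j x y ^ i :=
  calc (x ^ 2 * y ^ i) ^ j = x ^ (2 * j) * y ^ (j * i) := by
        rw [mul_pow, ← pow_mul, ← pow_mul, mul_comm i j]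
    _ ≤ x ^ (2 * i) * y ^ (j * i) :=
        mul_le_mul_of_nonneg_right (pow_le_pow_of_le_one hx0 hx1 (by omega)) (by positivity)
    _ = (x ^ 2 * y ^ j) ^ i := by rw [mul_pow, pow_mul, pow_mul]
    _ ≤ weight j x y ^ i := by
        unfold weight; gcongr; exact le_add_of_nonneg_left (by positivity)

theorem mul_sq_mul_sq_pow_le_weight {r : ℝ} (hx0 : 0 ≤ x) (hx1 : x ≤ 1) (hy : 0 ≤ y)
    (hr : 0 ≤ r) (hrx : r * x ≤ 1) (hry : r * y ≤ 1) (hj : 1 ≤ j) :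
    (r * x ^ 2 * y ^ 2) ^ j ≤ weight j x y := by
  rcases le_total y 1 with hy1 | hy1
  · calc (r * x ^ 2 * y ^ 2) ^ j ≤ (x * y ^ 2) ^ j :=
          pow_le_pow_left₀ (by positivity) (by nlinarith [mul_nonneg hx0 (sq_nonneg y)]) j
      _ = x ^ j * (y ^ 2) ^ j := mul_pow _ _ _
      _ ≤ x ^ j * y ^ 2 := mul_le_mul_of_nonneg_left
          (pow_le_of_le_one (by positivity) (pow_le_one₀ hy hy1) (by omega)) (by positivity)
      _ ≤ weight j x y := le_add_of_nonneg_right (by positivity)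
  · calc (r * x ^ 2 * y ^ 2) ^ j ≤ (x ^ 2 * y) ^ j :=
          pow_le_pow_left₀ (by positivity) (by nlinarith [mul_nonneg (sq_nonneg x) hy]) j
      _ = (x ^ 2) ^ j * y ^ j := mul_pow _ _ _
      _ ≤ x ^ 2 * y ^ j := mul_le_mul_of_nonneg_right
          (pow_le_of_le_one (by positivity) (pow_le_one₀ hx0 hx1) (by omega)) (by positivity)
      _ ≤ weight j x y := le_add_of_nonneg_left (by positivity)

theorem weight_le_two_mul_pow {β : ℝ} (hx0 : 0 ≤ x) (hx1 : x ≤ 1) (hy : 0 ≤ y) (hβ : 0 ≤ β)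
    (hβj : β ^ j = weight j x y) (h2i : 2 ≤ i) (hij : i ≤ j) : weight i x y ≤ 2 * β ^ i := by
  have hj : j ≠ 0 := by omega
  have h₁ := le_pow_of_pow_le_pow_pow (by positivity) hβ hj
    (hβj ▸ pow_mul_sq_pow_le_weight_pow hx0 hx1 hy h2i hij)
  have h₂ := le_pow_of_pow_le_pow_pow (by positivity) hβ hj
    (hβj ▸ sq_mul_pow_pow_le_weight_pow hx0 hx1 hy hij)
  unfold weight
  linarith

theorem exists_geometric_bound_of_le_weight {a : ℕ → ℝ} {M r : ℝ} (hj : 1 ≤ j) (hM : 0 ≤ M)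
    (hx0 : 0 ≤ x) (hx1 : x ≤ 1) (hy : 0 ≤ y) (hr : 0 ≤ r) (hrx : r * x ≤ 1) (hry : r * y ≤ 1)
    (ha1 : a 1 ≤ M * (r * x ^ 2 * y ^ 2)) (ha : ∀ i, 2 ≤ i → i ≤ j → a i ≤ M * weight i x y) :
    ∃ D, (∀ i, 1 ≤ i → i ≤ j → a i ≤ D ^ i) ∧
      D ^ j ≤ 2 ^ j * (M * (1 + M) ^ (j - 1)) * weight j x y := by
  have hj0 : j ≠ 0 := by omega
  obtain ⟨μ, hμ0, hMμ, hμj⟩ := exists_le_pow_and_pow_le_mul_one_add_pow hM hj0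
  set β := weight j x y ^ (j⁻¹ : ℝ)
  have hβ0 : 0 ≤ β := Real.rpow_nonneg (weight_nonneg hx0 hy j) _
  have hβj : β ^ j = weight j x y := Real.rpow_inv_natCast_pow (weight_nonneg hx0 hy j) hj0
  refine ⟨2 * μ * β, fun i h1i hij => ?_, ?_⟩
  · rcases h1i.eq_or_lt with rfl | h2i
    · have hrβ : r * x ^ 2 * y ^ 2 ≤ β ^ 1 :=
        le_pow_of_pow_le_pow_pow (by positivity) hβ0 hj0
          (by rw [hβj, pow_one]; exact mul_sq_mul_sq_pow_le_weight hx0 hx1 hy hr hrx hry hj)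
      calc a 1 ≤ μ ^ 1 * β ^ 1 := ha1.trans (mul_le_mul (hMμ 1 le_rfl hj) hrβ
              (by positivity) (by positivity))
        _ ≤ (2 * μ * β) ^ 1 := by nlinarith
    · calc a i ≤ μ ^ i * (2 * β ^ i) := (ha i h2i hij).trans (mul_le_mul (hMμ i h1i hij)
              (weight_le_two_mul_pow hx0 hx1 hy hβ0 hβj h2i hij) (weight_nonneg hx0 hy i)
              (by positivity))
        _ ≤ μ ^ i * (2 ^ i * β ^ i) := by gcongr; exact le_self_pow₀ one_le_two (by omega)
        _ = (2 * μ * β) ^ i := by ring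
  · have hw := weight_nonneg hx0 hy j
    rw [mul_pow, mul_pow, hβj]
    gcongr

end Weight

/-- under the Penrose-type lower bound `|1-K̃| ≥ c̊` and the stated
`ξ`-derivative bounds on `K̃`, the function `G̃ = K̃/(1-K̃)` satisfies for `j ≥ 1`:
`|∇_ξ^j G̃(τ,ξ)| ≤ C(c̊,j,d) M (1+M)^{j-1} (⟨ξ⟩^{-j}(|τ|+|ξ|)^{-2} + ⟨ξ⟩^{-2}(|τ|+|ξ|)^{-j})`. -/
theorem Gtilde_xi_deriv_bound (d j : ℕ) (hj : 1 ≤ j) (c : ℝ) (hc : 0 < c) :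
    ∃ C : ℝ, 0 < C ∧
      ∀ (K : ℝ → EuclideanSpace ℝ (Fin d) → ℂ) (M : ℝ), 0 ≤ M →
        (∀ τ, ContDiff ℝ j (K τ)) →
        (∀ τ ξ, c ≤ ‖1 - K τ ξ‖) →
        (∀ (τ : ℝ) (ξ : EuclideanSpace ℝ (Fin d)), ∀ i, 1 ≤ i → i ≤ j →
          ‖iteratedFDeriv ℝ i (K τ) ξ‖
            ≤ M * (Real.sqrt (1 + ‖ξ‖ ^ 2) ^ i * (|τ| + ‖ξ‖) ^ 2)⁻¹
              + M * (Real.sqrt (1 + ‖ξ‖ ^ 2) ^ 2 * (|τ| + ‖ξ‖) ^ i)⁻¹) →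
        (∀ (τ : ℝ) (ξ : EuclideanSpace ℝ (Fin d)),
          ‖iteratedFDeriv ℝ 1 (K τ) ξ‖
            ≤ M * ‖ξ‖ * (Real.sqrt (1 + ‖ξ‖ ^ 2) ^ 2 * (|τ| + ‖ξ‖) ^ 2)⁻¹) →
        ∀ (τ : ℝ) (ξ : EuclideanSpace ℝ (Fin d)),
          ‖iteratedFDeriv ℝ j (fun ξ' => K τ ξ' / (1 - K τ ξ')) ξ‖
            ≤ C * M * (1 + M) ^ (j - 1)
                * ((Real.sqrt (1 + ‖ξ‖ ^ 2) ^ j * (|τ| + ‖ξ‖) ^ 2)⁻¹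
                  + (Real.sqrt (1 + ‖ξ‖ ^ 2) ^ 2 * (|τ| + ‖ξ‖) ^ j)⁻¹) := by
  refine ⟨j ! * (j ! * (1 + c⁻¹) ^ (j + 1)) * 2 ^ j, by positivity, ?_⟩
  intro K M hM hK hpen hbound hbound1 τ ξ
  have hK1 : ∀ ξ', K τ ξ' ≠ 1 := fun ξ' h => by
    have := hpen τ ξ'
    rw [h, sub_self, norm_zero] at this
    linarith
  set A := √(1 + ‖ξ‖ ^ 2)
  set s := |τ| + ‖ξ‖
  have hA1 : 1 ≤ A := Real.one_le_sqrt.2 (le_add_of_nonneg_right (sq_nonneg _))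
  have hξA : ‖ξ‖ ≤ A := (Real.le_sqrt (norm_nonneg _) (by positivity)).2 (by linarith)
  obtain ⟨D, hD, hDj⟩ := exists_geometric_bound_of_le_weight
    (a := fun i => ‖iteratedFDeriv ℝ i (K τ) ξ‖) hj hM (by positivity) (inv_le_one_of_one_le₀ hA1)
    (by positivity) (norm_nonneg ξ) (mul_inv_le_one_of_le₀ hξA (by positivity))
    (mul_inv_le_one_of_le₀ (le_add_of_nonneg_left (abs_nonneg τ)) (by positivity))
    (by simpa only [mul_inv, inv_pow, mul_assoc] using hbound1 τ ξ)
    (fun i h2i hij => by rw [weight_inv, mul_add]; exact hbound τ ξ i (by omega) hij)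
  calc ‖iteratedFDeriv ℝ j (fun ξ' => K τ ξ' / (1 - K τ ξ')) ξ‖
      ≤ j ! * (j ! * (1 + c⁻¹) ^ (j + 1)) * D ^ j :=
        norm_iteratedFDeriv_div_one_sub_comp_le (by omega) (hK τ) hK1 hc (hpen τ ξ) hD
    _ ≤ j ! * (j ! * (1 + c⁻¹) ^ (j + 1)) * (2 ^ j * (M * (1 + M) ^ (j - 1)) * weight j A⁻¹ s⁻¹) :=
        mul_le_mul_of_nonneg_left hDj (by positivity)
    _ = _ := by rw [weight_inv]; ring
end

section
/- Let d ≥ 3 and 0 < b₀ < 1. Suppose G : (0,∞)×ℝ^d → ℝ satisfies |G(t,x)| ≤ M₀ (t+|x|)^{-(d-1)}(1+t+|x|)^{-2} and |∇_x G(t,x)| ≤ M₁ (t+|x|)^{-d}(1+t+|x|)^{-2}. Then for every α ∈ ℝ^d ∖ {0}, ∫_{ℝ^d} |x|^{b₀} |G(t,x) - G(t,x-α)| dx ≤ C(d,b₀) [ M₁ |α| (1+t+|α|)^{-(2-b₀)} + M₁ 1_{|α|>t} |α|^{b₀}(1+t)^{-1} + M₁ 1_{|α|≤t} |α|^{d+b₀}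 t^{-(d-1)}(1+t)^{-2} ] (assuming M₀ ≤ M₁). -/
/-!
Split the integral at `‖x‖ = 2‖α‖`. Where `‖x‖ ≥ 2‖α‖`, every point `y` of the segment
`[x - α, x]` has `‖y‖ ≥ ‖x‖ / 2`, so the mean value theorem bounds `δ_α G` by
`2^(d+2) M₁ ‖α‖ (t + ‖x‖)^(-d) (1 + t + ‖x‖)^(-2)`; integrating this against `‖x‖^b₀` in polar
coordinates gives the term `M₁ ‖α‖ (1 + t + ‖α‖)^(b₀-2)`. Where `‖x‖ < 2‖α‖`, we use
`‖x‖^b₀ ≤ (2‖α‖)^b₀` and `|δ_α G| ≤ |G(x)| + |G(x - α)|`, with both points in the ball of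
radius `3‖α‖`. The size bound of `G` integrates to `O((1 + t)⁻¹)` over all of `ℝ^d` (polar
coordinates again), and to `O(‖α‖^d t^(-(d-1)) (1 + t)^(-2))` over that ball (its volume times
the value at `0`); the first estimate is used when `t < ‖α‖`, the second when `‖α‖ ≤ t`.
-/

open MeasureTheory Set Real Metric Module

noncomputable def kernelDecay (k : ℕ) (t r : ℝ) : ℝ := ((t + r) ^ k * (1 + t + r) ^ 2)⁻¹

section KernelDecay

variable {k : ℕ} {t : ℝ}

theorem kernelDecay_pos (ht : 0 < t) {r : ℝ} (hr : 0 ≤ r) : 0 < kernelDecay k t r := by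
  unfold kernelDecay; positivity

theorem kernelDecay_le_two_pow_mul (ht : 0 < t) {u v : ℝ} (hu : 0 ≤ u) (huv : u ≤ 2 * v) :
    kernelDecay k t v ≤ 2 ^ (k + 2) * kernelDecay k t u := by
  have hv : 0 ≤ v := by linarith
  unfold kernelDecay
  rw [← div_eq_mul_inv, ← inv_div, pow_add, mul_div_mul_comm, ← div_pow, ← div_pow]
  gcongr <;> linarith

theorem kernelDecay_le_kernelDecay_zero (ht : 0 < t) {r : ℝ} (hr : 0 ≤ r) :
    kernelDecay k t r ≤ kernelDecay k t 0 := by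
  unfold kernelDecay; gcongr

theorem pow_mul_kernelDecay_le (ht : 0 < t) {r : ℝ} (hr : 0 ≤ r) :
    r ^ k * kernelDecay k t r ≤ ((1 + t + r) ^ 2)⁻¹ := by
  unfold kernelDecay
  rw [mul_inv, ← mul_assoc, ← div_eq_mul_inv]
  refine mul_le_of_le_one_left (by positivity) (div_le_one_of_le₀ ?_ (by positivity))
  gcongr; linarith

end KernelDecay

theorem abs_sub_le_of_norm_fderiv_le_kernelDecay {E : Type*} [NormedAddCommGroup E]
    [NormedSpace ℝ E] {f : E → ℝ} (hf : Differentiable ℝ f) {k : ℕ} {t M : ℝ} (ht : 0 < t)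
    (hf' : ∀ y, ‖fderiv ℝ f y‖ ≤ M * kernelDecay k t ‖y‖) {x α : E} (hx : 2 * ‖α‖ ≤ ‖x‖) :
    |f x - f (x - α)| ≤ 2 ^ (k + 2) * M * ‖α‖ * kernelDecay k t ‖x‖ := by
  have hM : 0 ≤ M := nonneg_of_mul_nonneg_left ((norm_nonneg _).trans (hf' 0))
    (kernelDecay_pos ht (norm_nonneg _))
  have hseg : segment ℝ (x - α) x ⊆ closedBall x ‖α‖ :=
    (convex_closedBall x ‖α‖).segment_subset (by simp) (mem_closedBall_self (norm_nonneg _))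
  have hbound : ∀ y ∈ segment ℝ (x - α) x,
      ‖fderiv ℝ f y‖ ≤ 2 ^ (k + 2) * M * kernelDecay k t ‖x‖ := fun y hy => by
    have hxy : ‖x‖ ≤ 2 * ‖y‖ := by
      have := norm_sub_norm_le x y
      rw [← dist_eq_norm, dist_comm] at this
      linarith [mem_closedBall.1 (hseg hy)]
    calc ‖fderiv ℝ f y‖ ≤ M * kernelDecay k t ‖y‖ := hf' y
      _ ≤ M * (2 ^ (k + 2) * kernelDecay k t ‖x‖) := by
        gcongr; exact kernelDecay_le_two_pow_mul ht (norm_nonneg _) hxy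
      _ = 2 ^ (k + 2) * M * kernelDecay k t ‖x‖ := by ring
  have := (convex_segment (x - α) x).norm_image_sub_le_of_norm_fderiv_le
    (fun y _ => hf.differentiableAt) hbound (left_mem_segment ℝ _ _) (right_mem_segment ℝ _ _)
  rw [sub_sub_cancel, Real.norm_eq_abs] at this
  linarith

theorem integral_Ioi_rpow_div_max_sq {b s : ℝ} (hb : 0 < b) (hb2 : b < 2) (hs : 0 < s) :
    IntegrableOn (fun r : ℝ => r ^ (b - 1) / max s r ^ 2) (Ioi 0) ∧
      ∫ r in Ioi 0, r ^ (b - 1) / max s r ^ 2 = (1 / b + 1 / (2 - b)) * s ^ (b - 2) := by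
  have h_near : EqOn (fun r : ℝ => r ^ (b - 1) / max s r ^ 2)
      (fun r => r ^ (b - 1) * (s ^ 2)⁻¹) (Ioc 0 s) := fun r hr => by
    simp only [max_eq_left hr.2, div_eq_mul_inv]
  have h_far : EqOn (fun r : ℝ => r ^ (b - 1) / max s r ^ 2) (fun r => r ^ (b - 3)) (Ioi s) :=
    fun r (hr : s < r) => by
      have hr0 : 0 < r := hs.trans hr
      show r ^ (b - 1) / max s r ^ 2 = r ^ (b - 3)
      rw [max_eq_right hr.le, ← rpow_natCast, ← rpow_sub hr0]
      norm_num
      ring_nf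
  have hi_near : IntegrableOn (fun r : ℝ => r ^ (b - 1) * (s ^ 2)⁻¹) (Ioc 0 s) := by
    refine Integrable.mul_const ?_ _
    rw [← IntegrableOn, ← intervalIntegrable_iff_integrableOn_Ioc_of_le hs.le]
    exact intervalIntegral.intervalIntegrable_rpow' (by linarith)
  have hi_far : IntegrableOn (fun r : ℝ => r ^ (b - 3)) (Ioi s) :=
    integrableOn_Ioi_rpow_of_lt (by linarith) hs
  refine ⟨?_, ?_⟩
  · rw [← Ioc_union_Ioi_eq_Ioi hs.le]
    exact ((integrableOn_congr_fun h_near measurableSet_Ioc).2 hi_near).union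
      ((integrableOn_congr_fun h_far measurableSet_Ioi).2 hi_far)
  · rw [← Ioc_union_Ioi_eq_Ioi hs.le, setIntegral_union Ioc_disjoint_Ioi_same measurableSet_Ioi
      ((integrableOn_congr_fun h_near measurableSet_Ioc).2 hi_near)
      ((integrableOn_congr_fun h_far measurableSet_Ioi).2 hi_far),
      setIntegral_congr_fun measurableSet_Ioc h_near, setIntegral_congr_fun measurableSet_Ioi h_far,
      integral_mul_const, ← intervalIntegral.integral_of_le hs.le,
      integral_rpow (by left; linarith),
      integral_Ioi_rpow_of_lt (by linarith) hs, zero_rpow (by linarith)]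
    have hpow : s ^ b * (s ^ 2)⁻¹ = s ^ (b - 2) := by rw [rpow_sub hs, rpow_two, div_eq_mul_inv]
    have h2b : 2 - b ≠ 0 := by linarith
    have hb2' : b - 2 ≠ 0 := by linarith
    rw [show b - 1 + 1 = b by ring, show b - 3 + 1 = b - 2 by ring, ← hpow]
    field_simp
    ring

noncomputable def farProfile (k : ℕ) (b t a : ℝ) : ℝ → ℝ :=
  (Ici (2 * a)).indicator fun r => r ^ b * kernelDecay k t r

/-- The cutoff `3 * a` contains both `‖x‖` and `‖x - α‖` whenever `‖x‖ < 2 * a = 2 * ‖α‖`. -/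
noncomputable def nearProfile (k : ℕ) (t a : ℝ) : ℝ → ℝ :=
  (Iio (3 * a)).indicator (kernelDecay k t)

section Profiles

variable {k : ℕ} {b t a : ℝ}

theorem farProfile_nonneg (ht : 0 < t) (ha : 0 ≤ a) (r : ℝ) : 0 ≤ farProfile k b t a r :=
  indicator_nonneg (fun r (hr : 2 * a ≤ r) =>
    mul_nonneg (rpow_nonneg (by linarith) _) (kernelDecay_pos ht (by linarith)).le) r

theorem nearProfile_nonneg (ht : 0 < t) {r : ℝ} (hr : 0 ≤ r) : 0 ≤ nearProfile k t a r :=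
  indicator_nonneg (fun _ _ => (kernelDecay_pos ht hr).le) r

theorem measurable_farProfile : Measurable (farProfile k b t a) :=
  Measurable.indicator (by unfold kernelDecay; fun_prop) measurableSet_Ici

theorem measurable_nearProfile : Measurable (nearProfile k t a) :=
  Measurable.indicator (by unfold kernelDecay; fun_prop) measurableSet_Iio

end Profiles

variable {E : Type*} [NormedAddCommGroup E] [NormedSpace ℝ E]

theorem rpow_norm_mul_abs_sub_le {f : E → ℝ} (hf : Differentiable ℝ f) {m n : ℕ}
    {b t M₀ M₁ : ℝ} (hb : 0 ≤ b) (ht : 0 < t)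
    (hf₀ : ∀ y, |f y| ≤ M₀ * kernelDecay m t ‖y‖)
    (hf₁ : ∀ y, ‖fderiv ℝ f y‖ ≤ M₁ * kernelDecay n t ‖y‖) (x α : E) :
    ‖x‖ ^ b * |f x - f (x - α)| ≤ 2 ^ (n + 2) * M₁ * ‖α‖ * farProfile n b t ‖α‖ ‖x‖
      + (2 * ‖α‖) ^ b * M₀ * (nearProfile m t ‖α‖ ‖x‖ + nearProfile m t ‖α‖ ‖x - α‖) := by
  rcases le_or_gt (2 * ‖α‖) ‖x‖ with hx | hx
  · have hM₀ : 0 ≤ M₀ := nonneg_of_mul_nonneg_left ((abs_nonneg _).trans (hf₀ 0))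
      (kernelDecay_pos ht (norm_nonneg _))
    have hnear : 0 ≤ (2 * ‖α‖) ^ b * M₀ * (nearProfile m t ‖α‖ ‖x‖ + nearProfile m t ‖α‖ ‖x - α‖) :=
      mul_nonneg (by positivity) (add_nonneg (nearProfile_nonneg ht (norm_nonneg _))
        (nearProfile_nonneg ht (norm_nonneg _)))
    have hfar : farProfile n b t ‖α‖ ‖x‖ = ‖x‖ ^ b * kernelDecay n t ‖x‖ :=
      indicator_of_mem (mem_Ici.2 hx) _
    calc ‖x‖ ^ b * |f x - f (x - α)|
        ≤ ‖x‖ ^ b * (2 ^ (n + 2) * M₁ * ‖α‖ * kernelDecay n t ‖x‖) := by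
          gcongr; exact abs_sub_le_of_norm_fderiv_le_kernelDecay hf ht hf₁ hx
      _ = 2 ^ (n + 2) * M₁ * ‖α‖ * farProfile n b t ‖α‖ ‖x‖ := by rw [hfar]; ring
      _ ≤ _ := le_add_of_nonneg_right hnear
  · have hfar : farProfile n b t ‖α‖ ‖x‖ = 0 := indicator_of_notMem (notMem_Ici.2 hx) _
    have hnear_x : nearProfile m t ‖α‖ ‖x‖ = kernelDecay m t ‖x‖ :=
      indicator_of_mem (mem_Iio.2 (by linarith [norm_nonneg α])) _
    have hnear_xα : nearProfile m t ‖α‖ ‖x - α‖ = kernelDecay m t ‖x - α‖ :=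
      indicator_of_mem (mem_Iio.2 (by linarith [norm_sub_le x α])) _
    rw [hfar, mul_zero, zero_add, hnear_x, hnear_xα]
    calc ‖x‖ ^ b * |f x - f (x - α)| ≤ (2 * ‖α‖) ^ b * (|f x| + |f (x - α)|) := by
          gcongr
          exact abs_sub _ _
      _ ≤ (2 * ‖α‖) ^ b * (M₀ * kernelDecay m t ‖x‖ + M₀ * kernelDecay m t ‖x - α‖) := by
          gcongr
          exacts [hf₀ x, hf₀ (x - α)]
      _ = _ := by ring

section Integral

variable [MeasurableSpace E] [BorelSpace E] (μ : Measure E) [μ.IsAddRightInvariant]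

theorem integral_rpow_norm_mul_abs_sub_le_profiles {f : E → ℝ} (hf : Differentiable ℝ f) {m n : ℕ}
    {b t M₀ M₁ : ℝ} (hb : 0 ≤ b) (ht : 0 < t)
    (hf₀ : ∀ y, |f y| ≤ M₀ * kernelDecay m t ‖y‖)
    (hf₁ : ∀ y, ‖fderiv ℝ f y‖ ≤ M₁ * kernelDecay n t ‖y‖) (α : E)
    (h_far : Integrable (fun x => farProfile n b t ‖α‖ ‖x‖) μ)
    (h_near : Integrable (fun x => nearProfile m t ‖α‖ ‖x‖) μ) :
    ∫ x, ‖x‖ ^ b * |f x - f (x - α)| ∂μ ≤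
      2 ^ (n + 2) * M₁ * ‖α‖ * ∫ x, farProfile n b t ‖α‖ ‖x‖ ∂μ
        + 2 * ((2 * ‖α‖) ^ b * M₀ * ∫ x, nearProfile m t ‖α‖ ‖x‖ ∂μ) := by
  have h_near₂ : Integrable (fun x => nearProfile m t ‖α‖ ‖x‖ + nearProfile m t ‖α‖ ‖x - α‖) μ :=
    h_near.add (h_near.comp_sub_right α)
  calc ∫ x, ‖x‖ ^ b * |f x - f (x - α)| ∂μ
      ≤ ∫ x, 2 ^ (n + 2) * M₁ * ‖α‖ * farProfile n b t ‖α‖ ‖x‖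
          + (2 * ‖α‖) ^ b * M₀ * (nearProfile m t ‖α‖ ‖x‖ + nearProfile m t ‖α‖ ‖x - α‖) ∂μ :=
        integral_mono_of_nonneg (ae_of_all _ fun x => by positivity)
          ((h_far.const_mul _).add (h_near₂.const_mul _))
          (ae_of_all _ fun x => rpow_norm_mul_abs_sub_le hf hb ht hf₀ hf₁ x α)
    _ = _ := by
      rw [integral_add (h_far.const_mul _) (h_near₂.const_mul _), integral_const_mul,
        integral_const_mul, integral_add h_near (h_near.comp_sub_right α),
        integral_sub_right_eq_self (fun x => nearProfile m t ‖α‖ ‖x‖) α]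
      ring

end Integral

section Radial

variable [MeasurableSpace E] [BorelSpace E] (μ : Measure E) [Nontrivial E] [FiniteDimensional ℝ E]
  [μ.IsAddHaarMeasure]

theorem integral_fun_norm_addHaar_le {f g : ℝ → ℝ} (hf : Measurable f)
    (hf₀ : ∀ r, 0 < r → 0 ≤ f r) (hfg : ∀ r, 0 < r → r ^ (finrank ℝ E - 1) * f r ≤ g r)
    (hg : IntegrableOn g (Ioi 0)) :
    Integrable (fun x => f ‖x‖) μ ∧
      ∫ x, f ‖x‖ ∂μ ≤ finrank ℝ E * μ.real (ball 0 1) * ∫ r in Ioi 0, g r := by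
  have hint : IntegrableOn (fun r : ℝ => r ^ (finrank ℝ E - 1) • f r) (Ioi 0) := by
    refine hg.mono' (by fun_prop) ((ae_restrict_iff' measurableSet_Ioi).2 (ae_of_all _ ?_))
    intro r (hr : 0 < r)
    rw [Real.norm_eq_abs, abs_of_nonneg (by simp only [smul_eq_mul]; positivity [hf₀ r hr])]
    exact hfg r hr
  refine ⟨(integrable_fun_norm_addHaar μ).2 hint, ?_⟩
  rw [integral_fun_norm_addHaar μ f, nsmul_eq_mul, smul_eq_mul, mul_assoc]
  have := setIntegral_mono_on hint hg measurableSet_Ioi hfg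
  gcongr

variable {b t a : ℝ}

theorem integral_farProfile_le (hb : 0 < b) (hb2 : b < 2) (ht : 0 < t) (ha : 0 ≤ a) :
    Integrable (fun x => farProfile (finrank ℝ E) b t a ‖x‖) μ ∧
      ∫ x, farProfile (finrank ℝ E) b t a ‖x‖ ∂μ ≤
        finrank ℝ E * μ.real (ball 0 1) * ((1 / b + 1 / (2 - b)) * (1 + t + a) ^ (b - 2)) := by
  obtain ⟨hg, hval⟩ := integral_Ioi_rpow_div_max_sq hb hb2 (by positivity : 0 < 1 + t + a)
  rw [← hval]
  refine integral_fun_norm_addHaar_le μ measurable_farProfile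
    (fun r _ => farProfile_nonneg ht ha r) (fun r hr => ?_) hg
  rcases le_or_gt (2 * a) r with hra | hra
  · have hn : 1 ≤ finrank ℝ E := finrank_pos
    have hpow : r ^ (finrank ℝ E - 1) * r ^ b = r ^ (b - 1) * r ^ finrank ℝ E := by
      rw [rpow_sub_one hr.ne', ← Nat.sub_add_cancel hn, pow_succ, Nat.add_sub_cancel]
      field_simp
    calc r ^ (finrank ℝ E - 1) * farProfile (finrank ℝ E) b t a r
        = r ^ (b - 1) * (r ^ finrank ℝ E * kernelDecay (finrank ℝ E) t r) := by
          rw [farProfile, indicator_of_mem (mem_Ici.2 hra), ← mul_assoc, hpow, mul_assoc]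
      _ ≤ r ^ (b - 1) * ((1 + t + r) ^ 2)⁻¹ := by
          gcongr; exact pow_mul_kernelDecay_le ht hr.le
      _ ≤ r ^ (b - 1) / max (1 + t + a) r ^ 2 := by
          rw [div_eq_mul_inv]
          gcongr
          exact max_le (by linarith) (by linarith)
  · rw [farProfile, indicator_of_notMem (notMem_Ici.2 hra), mul_zero]
    positivity

theorem integral_nearProfile_le (ht : 0 < t) :
    Integrable (fun x => nearProfile (finrank ℝ E - 1) t a ‖x‖) μ ∧
      ∫ x, nearProfile (finrank ℝ E - 1) t a ‖x‖ ∂μ ≤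
        finrank ℝ E * μ.real (ball 0 1) * (2 / (1 + t)) := by
  obtain ⟨hg, hval⟩ := integral_Ioi_rpow_div_max_sq one_pos one_lt_two (by positivity : 0 < 1 + t)
  have hval' : ∫ r in Ioi 0, r ^ ((1 : ℝ) - 1) / max (1 + t) r ^ 2 = 2 / (1 + t) := by
    rw [hval]; norm_num [rpow_neg_one]; ring
  rw [← hval']
  refine integral_fun_norm_addHaar_le μ measurable_nearProfile
    (fun r hr => nearProfile_nonneg ht hr.le) (fun r hr => ?_) hg
  calc r ^ (finrank ℝ E - 1) * nearProfile (finrank ℝ E - 1) t a r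
      ≤ r ^ (finrank ℝ E - 1) * kernelDecay (finrank ℝ E - 1) t r := by
        gcongr
        exact indicator_le_self' (fun _ _ => (kernelDecay_pos ht hr.le).le) r
    _ ≤ ((1 + t + r) ^ 2)⁻¹ := pow_mul_kernelDecay_le ht hr.le
    _ ≤ r ^ ((1 : ℝ) - 1) / max (1 + t) r ^ 2 := by
        rw [sub_self, rpow_zero, one_div]
        gcongr
        exact max_le (by linarith) (by linarith)

theorem integral_nearProfile_le_measure_ball (ht : 0 < t) (ha : 0 ≤ a) {k : ℕ} :
    ∫ x, nearProfile k t a ‖x‖ ∂μ ≤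
      (3 * a) ^ finrank ℝ E * μ.real (ball 0 1) * kernelDecay k t 0 := by
  have hle : ∀ x : E,
      nearProfile k t a ‖x‖ ≤ (ball (0 : E) (3 * a)).indicator (fun _ => kernelDecay k t 0) x := by
    intro x
    by_cases hx : ‖x‖ < 3 * a
    · rw [nearProfile, indicator_of_mem (mem_Iio.2 hx), indicator_of_mem (mem_ball_zero_iff.2 hx)]
      exact kernelDecay_le_kernelDecay_zero ht (norm_nonneg _)
    · rw [nearProfile, indicator_of_notMem (fun h => hx (mem_Iio.1 h)),
        indicator_of_notMem (fun h => hx (mem_ball_zero_iff.1 h))]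
  refine (integral_mono_of_nonneg (ae_of_all _ fun x => nearProfile_nonneg ht (norm_nonneg x))
    ((integrable_indicator_iff measurableSet_ball).2 (integrableOn_const measure_ball_lt_top.ne))
    (ae_of_all _ hle)).trans_eq ?_
  rw [integral_indicator_const _ measurableSet_ball, smul_eq_mul, measureReal_def,
    Measure.addHaar_ball μ 0 (by positivity), ENNReal.toReal_mul,
    ENNReal.toReal_ofReal (by positivity),
    measureReal_def]

theorem integral_rpow_norm_mul_abs_sub_le_of_kernelDecay {n : ℕ} (hn : finrank ℝ E = n)
    {f : E → ℝ} (hf : Differentiable ℝ f) {b t M₀ M₁ : ℝ} (hb : 0 < b) (hb2 : b < 2) (ht : 0 < t)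
    (hM : M₀ ≤ M₁) (hf₀ : ∀ y, |f y| ≤ M₀ * kernelDecay (n - 1) t ‖y‖)
    (hf₁ : ∀ y, ‖fderiv ℝ f y‖ ≤ M₁ * kernelDecay n t ‖y‖) (α : E) :
    ∫ x, ‖x‖ ^ b * |f x - f (x - α)| ∂μ ≤
      2 ^ (n + 2) * (n * μ.real (ball 0 1) * (1 / b + 1 / (2 - b)))
          * (M₁ * ‖α‖ / (1 + t + ‖α‖) ^ (2 - b))
        + 4 * 2 ^ b * (n * μ.real (ball 0 1))
          * ((if t < ‖α‖ then (1 : ℝ) else 0) * M₁ * ‖α‖ ^ b / (1 + t))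
        + 2 * 2 ^ b * 3 ^ n * μ.real (ball 0 1)
          * ((if ‖α‖ ≤ t then (1 : ℝ) else 0) * M₁ * ‖α‖ ^ ((n : ℝ) + b)
            / (t ^ (n - 1) * (1 + t) ^ 2)) := by
  set A := ‖α‖
  have hA : 0 ≤ A := norm_nonneg α
  have hM₀ : 0 ≤ M₀ := nonneg_of_mul_nonneg_left ((abs_nonneg _).trans (hf₀ 0))
    (kernelDecay_pos ht (norm_nonneg _))
  have hM₁ : 0 ≤ M₁ := hM₀.trans hM
  obtain ⟨hfar_int, hfar⟩ := integral_farProfile_le μ hb hb2 ht hA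
  obtain ⟨hnear_int, hnear⟩ := integral_nearProfile_le μ (a := A) ht
  have hnear_ball := integral_nearProfile_le_measure_ball μ ht hA (k := finrank ℝ E - 1)
  rw [hn] at hfar_int hfar hnear_int hnear hnear_ball
  have hnear_nonneg : 0 ≤ ∫ x, nearProfile (n - 1) t A ‖x‖ ∂μ :=
    integral_nonneg fun x => nearProfile_nonneg ht (norm_nonneg x)
  have hfar_term : 2 ^ (n + 2) * M₁ * A * ∫ x, farProfile n b t A ‖x‖ ∂μ ≤
      2 ^ (n + 2) * (n * μ.real (ball 0 1) * (1 / b + 1 / (2 - b)))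
        * (M₁ * A / (1 + t + A) ^ (2 - b)) := by
    refine (mul_le_mul_of_nonneg_left hfar (by positivity)).trans_eq ?_
    rw [div_eq_mul_inv _ ((1 + t + A) ^ (2 - b)), ← rpow_neg (by positivity), neg_sub]
    ring
  have hnear_term : 2 * ((2 * A) ^ b * M₀ * ∫ x, nearProfile (n - 1) t A ‖x‖ ∂μ) ≤
      4 * 2 ^ b * (n * μ.real (ball 0 1))
          * ((if t < A then (1 : ℝ) else 0) * M₁ * A ^ b / (1 + t))
        + 2 * 2 ^ b * 3 ^ n * μ.real (ball 0 1)
          * ((if A ≤ t then (1 : ℝ) else 0) * M₁ * A ^ ((n : ℝ) + b)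
            / (t ^ (n - 1) * (1 + t) ^ 2)) := by
    rw [mul_rpow two_pos.le hA]
    rcases lt_or_ge t A with htA | hAt
    · rw [if_pos htA, if_neg htA.not_ge]
      grw [hM, hnear]
      exact le_of_eq (by ring)
    · rw [if_neg hAt.not_gt, if_pos hAt]
      grw [hM, hnear_ball]
      rw [kernelDecay, add_zero, add_zero, rpow_add' hA (by positivity), rpow_natCast, mul_pow]
      exact le_of_eq (by ring)
  grw [integral_rpow_norm_mul_abs_sub_le_profiles μ hf hb.le ht hf₀ hf₁ α hfar_int hnear_int,
    hfar_term, hnear_term]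
  exact le_of_eq (by ring)

end Radial

theorem weighted_L1_difference_bound_general (d : ℕ)
    (b₀ : ℝ) (hb₀ : 0 < b₀) (hb₀' : b₀ < 1) :
    ∃ C : ℝ, 0 < C ∧
      ∀ (G : ℝ → EuclideanSpace ℝ (Fin d) → ℝ) (M₀ M₁ : ℝ),
        0 ≤ M₀ → M₀ ≤ M₁ →
        (∀ t, 0 < t → Differentiable ℝ (G t)) →
        (∀ (t : ℝ) (x : EuclideanSpace ℝ (Fin d)), 0 < t →
          |G t x| ≤ M₀ / ((t + ‖x‖) ^ (d - 1) * (1 + t + ‖x‖) ^ 2)) →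
        (∀ (t : ℝ) (x : EuclideanSpace ℝ (Fin d)), 0 < t →
          ‖fderiv ℝ (G t) x‖ ≤ M₁ / ((t + ‖x‖) ^ d * (1 + t + ‖x‖) ^ 2)) →
        ∀ (t : ℝ) (α : EuclideanSpace ℝ (Fin d)), 0 < t → α ≠ 0 →
          (∫ x : EuclideanSpace ℝ (Fin d), ‖x‖ ^ b₀ * |G t x - G t (x - α)|)
            ≤ C * (M₁ * ‖α‖ / (1 + t + ‖α‖) ^ (2 - b₀)
                + (if t < ‖α‖ then (1 : ℝ) else 0) * M₁ * ‖α‖ ^ b₀ / (1 + t)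
                + (if ‖α‖ ≤ t then (1 : ℝ) else 0) * M₁ * ‖α‖ ^ ((d : ℝ) + b₀)
                    / (t ^ (d - 1) * (1 + t) ^ 2)) := by
  have hb₀2 : 0 < 2 - b₀ := by linarith
  set V := (volume : Measure (EuclideanSpace ℝ (Fin d))).real (ball 0 1)
  set C₁ := 2 ^ (d + 2) * (d * V * (1 / b₀ + 1 / (2 - b₀)))
  set C₂ := 4 * 2 ^ b₀ * (d * V)
  set C₃ := 2 * 2 ^ b₀ * 3 ^ d * V
  refine ⟨C₁ + C₂ + C₃ + 1, by positivity, ?_⟩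
  intro G M₀ M₁ hM₀ hM G_diff G_le fderiv_G_le t α ht hα
  have : Nontrivial (EuclideanSpace ℝ (Fin d)) := nontrivial_of_ne α 0 hα
  refine (integral_rpow_norm_mul_abs_sub_le_of_kernelDecay volume finrank_euclideanSpace_fin
    (G_diff t ht) hb₀ (by linarith) ht hM (fun y => (G_le t y ht).trans_eq (div_eq_mul_inv _ _))
    (fun y => (fderiv_G_le t y ht).trans_eq (div_eq_mul_inv _ _)) α).trans ?_
  have hM₁ : 0 ≤ M₁ := hM₀.trans hM
  show C₁ * _ + C₂ * _ + C₃ * _ ≤ _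
  rw [mul_add (C₁ + C₂ + C₃ + 1), mul_add (C₁ + C₂ + C₃ + 1)]
  gcongr ?_ * _ + ?_ * _ + ?_ * _ <;> linarith [show 0 ≤ C₁ by positivity,
    show 0 ≤ C₂ by positivity, show 0 ≤ C₃ by positivity]

/-- weighted `L¹` bound for the finite difference `δ_α G`:
`∫ |x|^{b₀} |G(t,x) - G(t,x-α)| dx ≤ C [ M₁|α|(1+t+|α|)^{-(2-b₀)}
  + M₁ 1_{|α|>t} |α|^{b₀}(1+t)^{-1} + M₁ 1_{|α|≤t} |α|^{d+b₀} t^{-(d-1)}(1+t)^{-2} ]`. -/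
theorem weighted_L1_difference_bound (d : ℕ) (hd : 3 ≤ d)
    (b₀ : ℝ) (hb₀ : 0 < b₀) (hb₀' : b₀ < 1) :
    ∃ C : ℝ, 0 < C ∧
      ∀ (G : ℝ → EuclideanSpace ℝ (Fin d) → ℝ) (M₀ M₁ : ℝ),
        0 ≤ M₀ → M₀ ≤ M₁ →
        (∀ t, 0 < t → Differentiable ℝ (G t)) →
        (∀ (t : ℝ) (x : EuclideanSpace ℝ (Fin d)), 0 < t →
          |G t x| ≤ M₀ / ((t + ‖x‖) ^ (d - 1) * (1 + t + ‖x‖) ^ 2)) →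
        (∀ (t : ℝ) (x : EuclideanSpace ℝ (Fin d)), 0 < t →
          ‖fderiv ℝ (G t) x‖ ≤ M₁ / ((t + ‖x‖) ^ d * (1 + t + ‖x‖) ^ 2)) →
        ∀ (t : ℝ) (α : EuclideanSpace ℝ (Fin d)), 0 < t → α ≠ 0 →
          (∫ x : EuclideanSpace ℝ (Fin d), ‖x‖ ^ b₀ * |G t x - G t (x - α)|)
            ≤ C * (M₁ * ‖α‖ / (1 + t + ‖α‖) ^ (2 - b₀)
                + (if t < ‖α‖ then (1 : ℝ) else 0) * M₁ * ‖α‖ ^ b₀ / (1 + t)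
                + (if ‖α‖ ≤ t then (1 : ℝ) else 0) * M₁ * ‖α‖ ^ ((d : ℝ) + b₀)
                    / (t ^ (d - 1) * (1 + t) ^ 2)) :=
  weighted_L1_difference_bound_general d b₀ hb₀ hb₀'
end

section
/- (Polynomial chain-rule remainder estimate.) Let H₀ : ℝ^d → ℝ be C^{|γ|} and A₀ : ℝ^d → ℝ^d be C^{|γ|}, λ ∈ ℝ, and let γ be a nonzero multi-index. Then at every point x, |∂_x^γ [H₀(λx + A₀(x))] − (∂_x^γ H₀)(λx+A₀(x)) λ^{|γ|}| ≤ C(d,γ) [ |(∇^{|γ|}H₀)(λx+A₀(x))| |∇A₀(x)| (|λ| + |∇A₀(x)|)^{|γ|−1} + Σ_{k=1}^{|γ|−1} Σ_{j=0}^{k−1} Σ_{i=2}^{|γ|−j} |(∇^k H₀)(λx+A₀(x))| (|λ|+|∇A₀(x)|)^j |∇^i A₀(x)|^{(|γ|−j)/i} ]. -/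
/-!
By Faà di Bruno, `Dⁿ(H ∘ g) x` with `g y = λ y + A y` is the sum over the ordered partitions `c`
of `{0, …, n-1}` of `D^{#c} H (g x)` fed with derivatives of `g` of the block sizes of `c`.
The partition into singletons contributes `Dⁿ H (g x) (Dg x ·, …, Dg x ·)`, and since
`Dg x = λ + DA x` this differs from `λⁿ Dⁿ H (g x)` by at most
`n ‖Dⁿ H‖ ‖DA‖ (|λ| + ‖DA‖)ⁿ⁻¹`. Any other partition has `k < n` blocks, of which `j < k` are
singletons; the other blocks have sizes `iₘ ≥ 2` summing to `n - j`, where `Dⁱᵐ g = Dⁱᵐ A`,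
and `∏ₘ ‖Dⁱᵐ A‖ ≤ S := ∑ᵢ ‖Dⁱ A‖^((n - j) / i)` because each factor is at most `S^(iₘ / (n - j))`.
-/

open Finset

namespace OrderedFinpartition

variable {n : ℕ} (c : OrderedFinpartition n)

lemma sum_partSize : ∑ m, c.partSize m = n := by
  simpa [Fintype.card_sigma] using Fintype.card_congr c.equivSigma

lemma eq_atomic_of_forall_partSize_eq_one (h : ∀ m, c.partSize m = 1) : c = atomic n := by
  have hlen : c.length = n := by simpa [h] using c.sum_partSize
  obtain ⟨ℓ, partSize, _, emb, _, hmono, _, _⟩ := c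
  obtain rfl : ℓ = n := hlen
  obtain rfl : partSize = fun _ => 1 := funext h
  have hid : (fun m => emb m 0) = id :=
    (StrictMono.range_inj hmono strictMono_id).1 <| by
      rw [Set.range_id]
      exact Set.range_eq_univ.2 (Finite.surjective_of_injective hmono.injective)
  obtain rfl : emb = fun m _ => m := by
    funext m j
    rw [Subsingleton.elim j 0]
    exact congrFun hid m
  rfl

def singletonParts : Finset (Fin c.length) := {m | c.partSize m = 1}

lemma two_le_partSize_of_mem_compl {m : Fin c.length} (hm : m ∈ c.singletonPartsᶜ) :
    2 ≤ c.partSize m := by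
  have := c.partSize_pos m
  simp only [singletonParts, mem_compl, mem_filter, mem_univ, true_and] at hm
  omega

lemma card_singletonParts_add_sum_compl :
    #c.singletonParts + ∑ m ∈ c.singletonPartsᶜ, c.partSize m = n := by
  have hsum := c.sum_partSize
  rw [← sum_add_sum_compl c.singletonParts] at hsum
  rwa [sum_const_nat fun m (hm : m ∈ c.singletonParts) => (mem_filter.1 hm).2, mul_one] at hsum

lemma partSize_le_sub_card_singletonParts {m : Fin c.length} (hm : m ∈ c.singletonPartsᶜ) :
    c.partSize m ≤ n - #c.singletonParts := by
  have := single_le_sum (fun m _ => Nat.zero_le (c.partSize m)) hm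
  have := c.card_singletonParts_add_sum_compl
  omega

variable {c}

lemma compl_singletonParts_nonempty (hc : c ≠ atomic n) : c.singletonPartsᶜ.Nonempty := by
  by_contra h
  refine hc (c.eq_atomic_of_forall_partSize_eq_one fun m => ?_)
  have hm : m ∈ c.singletonParts := by
    rw [not_nonempty_iff_eq_empty, compl_eq_empty_iff] at h
    exact h ▸ mem_univ m
  simpa [singletonParts] using hm

lemma card_singletonParts_lt_length (hc : c ≠ atomic n) : #c.singletonParts < c.length := by
  have := (compl_singletonParts_nonempty hc).card_pos
  rw [card_compl, Fintype.card_fin] at this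
  omega

lemma length_lt_of_ne_atomic (hc : c ≠ atomic n) : c.length < n := by
  have hsum : 2 * #c.singletonPartsᶜ ≤ ∑ m ∈ c.singletonPartsᶜ, c.partSize m := by
    rw [mul_comm, ← smul_eq_mul, ← sum_const]
    exact sum_le_sum fun m hm => c.two_le_partSize_of_mem_compl hm
  have hpos := (compl_singletonParts_nonempty hc).card_pos
  have := c.card_singletonParts_add_sum_compl
  rw [card_compl, Fintype.card_fin] at hsum hpos
  omega

end OrderedFinpartition

theorem Real.prod_le_of_forall_rpow_le {ι : Type*} {s : Finset ι} {a w : ι → ℝ} {S : ℝ}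
    (ha : ∀ i ∈ s, 0 ≤ a i) (hw : ∀ i ∈ s, 0 < w i) (hs : 0 < ∑ i ∈ s, w i) (hS : 0 ≤ S)
    (h : ∀ i ∈ s, a i ^ ((∑ j ∈ s, w j) / w i) ≤ S) : ∏ i ∈ s, a i ≤ S := by
  set N := ∑ j ∈ s, w j
  calc ∏ i ∈ s, a i
      = ∏ i ∈ s, (a i ^ (N / w i)) ^ (w i / N) := prod_congr rfl fun i hi => by
        have := (hw i hi).ne'
        rw [← Real.rpow_mul (ha i hi), show N / w i * (w i / N) = 1 by field_simp, Real.rpow_one]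
    _ ≤ ∏ i ∈ s, S ^ (w i / N) :=
      prod_le_prod (fun i hi => Real.rpow_nonneg (Real.rpow_nonneg (ha i hi) _) _) fun i hi =>
        Real.rpow_le_rpow (Real.rpow_nonneg (ha i hi) _) (h i hi) (div_pos (hw i hi) hs).le
    _ = S := by
        rw [← Real.rpow_sum_of_nonneg hS fun i hi => (div_pos (hw i hi) hs).le, ← sum_div,
          div_self hs.ne', Real.rpow_one]

namespace FormalMultilinearSeries

open OrderedFinpartition

variable {𝕜 E F G : Type*} [NontriviallyNormedField 𝕜]
  [NormedAddCommGroup E] [NormedSpace 𝕜 E] [NormedAddCommGroup F] [NormedSpace 𝕜 F]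
  [NormedAddCommGroup G] [NormedSpace 𝕜 G] {n : ℕ}
  (q : FormalMultilinearSeries 𝕜 F G) (p : FormalMultilinearSeries 𝕜 E F)

lemma compAlongOrderedFinpartition_atomic :
    q.compAlongOrderedFinpartition p (atomic n) =
      (q n).compContinuousLinearMap fun _ => continuousMultilinearCurryFin1 𝕜 E F (p 1) :=
  rfl

lemma norm_compAlongOrderedFinpartition_le_of_ne_atomic {c : OrderedFinpartition n}
    (hc : c ≠ atomic n) {M : ℝ} (hp : ‖p 1‖ ≤ M) :
    ‖q.compAlongOrderedFinpartition p c‖ ≤ ‖q c.length‖ * M ^ #c.singletonParts *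
      ∑ i ∈ Icc 2 (n - #c.singletonParts), ‖p i‖ ^ (((n : ℝ) - #c.singletonParts) / i) := by
  set j := #c.singletonParts
  set S := ∑ i ∈ Icc 2 (n - j), ‖p i‖ ^ (((n : ℝ) - j) / i)
  have hN : (n : ℝ) - j = ∑ m ∈ c.singletonPartsᶜ, (c.partSize m : ℝ) := by
    have h := congrArg (Nat.cast : ℕ → ℝ) c.card_singletonParts_add_sum_compl
    push_cast at h
    linarith
  have hsingle : ∏ m ∈ c.singletonParts, ‖p (c.partSize m)‖ ≤ M ^ j := by
    rw [prod_congr rfl fun m hm => by rw [(mem_filter.1 hm).2], prod_const]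
    exact pow_le_pow_left₀ (norm_nonneg _) hp j
  have hlarge : ∏ m ∈ c.singletonPartsᶜ, ‖p (c.partSize m)‖ ≤ S := by
    refine Real.prod_le_of_forall_rpow_le (w := fun m => (c.partSize m : ℝ))
      (fun _ _ => norm_nonneg _) (fun m _ => Nat.cast_pos.2 (c.partSize_pos m)) ?_
      (by positivity) fun m hm => ?_
    · rw [← hN, sub_pos]
      exact_mod_cast (c.card_singletonParts_lt_length hc).trans (length_lt_of_ne_atomic hc)
    · rw [← hN]
      exact single_le_sum (f := fun i => ‖p i‖ ^ (((n : ℝ) - j) / i))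
        (fun i _ => by positivity) (mem_Icc.2 ⟨c.two_le_partSize_of_mem_compl hm,
          c.partSize_le_sub_card_singletonParts hm⟩)
  calc ‖q.compAlongOrderedFinpartition p c‖
      ≤ ‖q c.length‖ * ∏ m, ‖p (c.partSize m)‖ := c.norm_compAlongOrderedFinpartition_le _ _
    _ = ‖q c.length‖ * ((∏ m ∈ c.singletonParts, ‖p (c.partSize m)‖) *
          ∏ m ∈ c.singletonPartsᶜ, ‖p (c.partSize m)‖) := by rw [prod_mul_prod_compl]
    _ ≤ ‖q c.length‖ * (M ^ j * S) := by
        have := (norm_nonneg _).trans hp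
        gcongr
    _ = ‖q c.length‖ * M ^ j * S := by ring

end FormalMultilinearSeries

lemma ContinuousLinearMap.norm_smul_id_le {𝕜 E : Type*} [NontriviallyNormedField 𝕜]
    [NormedAddCommGroup E] [NormedSpace 𝕜 E] (a : 𝕜) : ‖a • ContinuousLinearMap.id 𝕜 E‖ ≤ ‖a‖ :=
  (norm_smul_le _ _).trans (mul_le_of_le_one_right (norm_nonneg _) norm_id_le)

namespace ContinuousMultilinearMap

variable {𝕜 E G : Type*} [NontriviallyNormedField 𝕜]
  [NormedAddCommGroup E] [NormedSpace 𝕜 E] [NormedAddCommGroup G] [NormedSpace 𝕜 G] {n : ℕ}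

lemma compContinuousLinearMap_smul_id (f : ContinuousMultilinearMap 𝕜 (fun _ : Fin n => E) G)
    (a : 𝕜) : f.compContinuousLinearMap (fun _ => a • ContinuousLinearMap.id 𝕜 E) = a ^ n • f := by
  ext v
  simpa using f.map_smul_univ (fun _ => a) v

lemma norm_compContinuousLinearMap_smul_id_add_sub_le
    (f : ContinuousMultilinearMap 𝕜 (fun _ : Fin n => E) G) (a : 𝕜) (L : E →L[𝕜] E) :
    ‖f.compContinuousLinearMap (fun _ => a • ContinuousLinearMap.id 𝕜 E + L) - a ^ n • f‖ ≤
      n * (‖f‖ * ‖L‖ * (‖a‖ + ‖L‖) ^ (n - 1)) := by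
  -- the multilinear difference estimate, applied to `(L₁, …, Lₙ) ↦ f ∘ (L₁, …, Lₙ)` of norm `≤ 1`
  set Φ := compContinuousLinearMapContinuousMultilinear 𝕜 (fun _ : Fin n => E) (fun _ => E) G
  have hΦ : ‖Φ‖ ≤ 1 := MultilinearMap.mkContinuous_norm_le _ zero_le_one _
  set I := a • ContinuousLinearMap.id 𝕜 E
  have hI : ‖I‖ ≤ ‖a‖ := ContinuousLinearMap.norm_smul_id_le a
  have hmax : max ‖fun _ : Fin n => I + L‖ ‖fun _ : Fin n => I‖ ≤ ‖a‖ + ‖L‖ :=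
    max_le ((pi_norm_const_le _).trans ((norm_add_le _ _).trans (by gcongr)))
      ((pi_norm_const_le _).trans (hI.trans (le_add_of_nonneg_right (norm_nonneg _))))
  have hdiff : ‖(fun _ : Fin n => I + L) - fun _ => I‖ ≤ ‖L‖ := by
    simpa [Pi.sub_def] using pi_norm_const_le (ι := Fin n) L
  rw [← f.compContinuousLinearMap_smul_id]
  calc ‖Φ (fun _ => I + L) f - Φ (fun _ => I) f‖
      ≤ ‖Φ (fun _ => I + L) - Φ (fun _ => I)‖ * ‖f‖ := by
        rw [← sub_apply]
        exact ContinuousLinearMap.le_opNorm _ f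
    _ ≤ ‖Φ‖ * Fintype.card (Fin n) * (‖a‖ + ‖L‖) ^ (Fintype.card (Fin n) - 1) * ‖L‖ * ‖f‖ := by
        gcongr
        exact (Φ.norm_image_sub_le _ _).trans (by gcongr)
    _ ≤ 1 * n * (‖a‖ + ‖L‖) ^ (n - 1) * ‖L‖ * ‖f‖ := by
        rw [Fintype.card_fin]
        gcongr
    _ = n * (‖f‖ * ‖L‖ * (‖a‖ + ‖L‖) ^ (n - 1)) := by ring

end ContinuousMultilinearMap

section Derivatives

variable {𝕜 E F : Type*} [NontriviallyNormedField 𝕜]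
  [NormedAddCommGroup E] [NormedSpace 𝕜 E] [NormedAddCommGroup F] [NormedSpace 𝕜 F]

lemma ContinuousLinearMap.iteratedFDeriv_eq_zero (L : E →L[𝕜] F) {i : ℕ} (hi : 2 ≤ i) :
    iteratedFDeriv 𝕜 i L = 0 := by
  obtain ⟨j, rfl⟩ : ∃ j, i = j + 1 + 1 := ⟨i - 2, by omega⟩
  ext x v
  rw [iteratedFDeriv_succ_apply_right, show fderiv 𝕜 L = fun _ => L from funext fun _ => L.fderiv,
    iteratedFDeriv_const_of_ne (by omega)]
  simp

variable {A : E → E} (a : 𝕜) {x : E}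

lemma fderiv_smul_id_add (hA : DifferentiableAt 𝕜 A x) :
    fderiv 𝕜 (fun y => a • y + A y) x = a • ContinuousLinearMap.id 𝕜 E + fderiv 𝕜 A x :=
  (((hasFDerivAt_id x).const_smul a).add hA.hasFDerivAt).fderiv

lemma iteratedFDeriv_smul_id_add {i : ℕ} (hi : 2 ≤ i) (hA : ContDiffAt 𝕜 i A x) :
    iteratedFDeriv 𝕜 i (fun y => a • y + A y) x = iteratedFDeriv 𝕜 i A x := by
  have hL : ContDiffAt 𝕜 i (a • ContinuousLinearMap.id 𝕜 E) x :=
    (ContinuousLinearMap.contDiff _).contDiffAt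
  have := iteratedFDeriv_add_apply hL hA
  rwa [(a • ContinuousLinearMap.id 𝕜 E).iteratedFDeriv_eq_zero hi, Pi.zero_apply, zero_add] at this

end Derivatives

section ChainRule

open OrderedFinpartition FormalMultilinearSeries

variable {E F : Type*} [NormedAddCommGroup E] [NormedSpace ℝ E] [NormedAddCommGroup F]
  [NormedSpace ℝ F] {n : ℕ} {H : E → F} {A : E → E} (a : ℝ) (x : E)

lemma norm_compAlongOrderedFinpartition_atomic_ftaylorSeries_sub_le
    (hA : DifferentiableAt ℝ A x) :
    ‖(ftaylorSeries ℝ H (a • x + A x)).compAlongOrderedFinpartition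
        (ftaylorSeries ℝ (fun y => a • y + A y) x) (atomic n) -
      a ^ n • iteratedFDeriv ℝ n H (a • x + A x)‖ ≤
    n * (‖iteratedFDeriv ℝ n H (a • x + A x)‖ * ‖fderiv ℝ A x‖ *
      (|a| + ‖fderiv ℝ A x‖) ^ (n - 1)) := by
  have hp1 : continuousMultilinearCurryFin1 ℝ E E (ftaylorSeries ℝ (fun y => a • y + A y) x 1) =
      fderiv ℝ (fun y => a • y + A y) x := by
    ext v
    simp [ftaylorSeries, iteratedFDeriv_one_apply]
  rw [compAlongOrderedFinpartition_atomic, hp1, fderiv_smul_id_add a hA, ← Real.norm_eq_abs]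
  exact ContinuousMultilinearMap.norm_compContinuousLinearMap_smul_id_add_sub_le _ _ _

lemma norm_compAlongOrderedFinpartition_ftaylorSeries_le_of_ne_atomic (hA : ContDiff ℝ n A)
    {c : OrderedFinpartition n} (hc : c ≠ atomic n) :
    ‖(ftaylorSeries ℝ H (a • x + A x)).compAlongOrderedFinpartition
        (ftaylorSeries ℝ (fun y => a • y + A y) x) c‖ ≤
      ∑ k ∈ Ico 1 n, ∑ j ∈ range k, ∑ i ∈ Icc 2 (n - j),
        ‖iteratedFDeriv ℝ k H (a • x + A x)‖ * (|a| + ‖fderiv ℝ A x‖) ^ j *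
          ‖iteratedFDeriv ℝ i A x‖ ^ (((n : ℝ) - j) / i) := by
  set M := |a| + ‖fderiv ℝ A x‖
  have hkn := length_lt_of_ne_atomic hc
  have hjk := card_singletonParts_lt_length hc
  have hp1 : ‖ftaylorSeries ℝ (fun y => a • y + A y) x 1‖ ≤ M := by
    rw [ftaylorSeries, norm_iteratedFDeriv_one,
      fderiv_smul_id_add a (hA.differentiable (by exact_mod_cast (by omega : n ≠ 0)) x)]
    exact (norm_add_le _ _).trans (add_le_add (ContinuousLinearMap.norm_smul_id_le a) le_rfl)
  refine (norm_compAlongOrderedFinpartition_le_of_ne_atomic _ _ hc hp1).trans ?_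
  set T : ℕ → ℕ → ℕ → ℝ := fun k j i => ‖iteratedFDeriv ℝ k H (a • x + A x)‖ * M ^ j *
    ‖iteratedFDeriv ℝ i A x‖ ^ (((n : ℝ) - j) / i)
  have hT (k j i : ℕ) : 0 ≤ T k j i := by positivity
  calc ‖ftaylorSeries ℝ H (a • x + A x) c.length‖ * M ^ #c.singletonParts *
        ∑ i ∈ Icc 2 (n - #c.singletonParts), ‖ftaylorSeries ℝ (fun y => a • y + A y) x i‖ ^
          (((n : ℝ) - #c.singletonParts) / i)
      = ∑ i ∈ Icc 2 (n - #c.singletonParts), T c.length #c.singletonParts i := by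
        rw [mul_sum]
        refine sum_congr rfl fun i hi => ?_
        have hi := mem_Icc.1 hi
        rw [ftaylorSeries, ftaylorSeries, iteratedFDeriv_smul_id_add a hi.1
          (hA.of_le (by exact_mod_cast (by omega : i ≤ n))).contDiffAt]
    _ ≤ ∑ j ∈ range c.length, ∑ i ∈ Icc 2 (n - j), T c.length j i :=
        single_le_sum (f := fun j => ∑ i ∈ Icc 2 (n - j), T c.length j i)
          (fun _ _ => sum_nonneg fun _ _ => hT _ _ _) (mem_range.2 hjk)
    _ ≤ ∑ k ∈ Ico 1 n, ∑ j ∈ range k, ∑ i ∈ Icc 2 (n - j), T k j i :=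
        single_le_sum (f := fun k => ∑ j ∈ range k, ∑ i ∈ Icc 2 (n - j), T k j i)
          (fun _ _ => sum_nonneg fun _ _ => sum_nonneg fun _ _ => hT _ _ _)
          (mem_Ico.2 ⟨by omega, hkn⟩)

theorem norm_iteratedFDeriv_comp_smul_id_add_sub_le (hn : 1 ≤ n) (hH : ContDiff ℝ n H)
    (hA : ContDiff ℝ n A) :
    ‖iteratedFDeriv ℝ n (fun y => H (a • y + A y)) x -
        a ^ n • iteratedFDeriv ℝ n H (a • x + A x)‖ ≤
      n * (‖iteratedFDeriv ℝ n H (a • x + A x)‖ * ‖fderiv ℝ A x‖ *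
          (|a| + ‖fderiv ℝ A x‖) ^ (n - 1)) +
        Fintype.card (OrderedFinpartition n) *
          ∑ k ∈ Ico 1 n, ∑ j ∈ range k, ∑ i ∈ Icc 2 (n - j),
            ‖iteratedFDeriv ℝ k H (a • x + A x)‖ * (|a| + ‖fderiv ℝ A x‖) ^ j *
              ‖iteratedFDeriv ℝ i A x‖ ^ (((n : ℝ) - j) / i) := by
  have hg : ContDiff ℝ n (fun y => a • y + A y) := (contDiff_id.const_smul a).add hA
  have hfaa := iteratedFDeriv_comp hH.contDiffAt hg.contDiffAt (x := x) le_rfl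
  change ‖iteratedFDeriv ℝ n (H ∘ fun y => a • y + A y) x - _‖ ≤ _
  rw [hfaa, FormalMultilinearSeries.taylorComp, ← add_sum_erase _ _ (mem_univ (atomic n)),
    add_sub_right_comm]
  refine (norm_add_le _ _).trans (add_le_add
    (norm_compAlongOrderedFinpartition_atomic_ftaylorSeries_sub_le a x
      (hA.differentiable (by exact_mod_cast (by omega : n ≠ 0)) x)) ?_)
  refine (norm_sum_le _ _).trans ((sum_le_card_nsmul _ _ _ fun c hc =>
    norm_compAlongOrderedFinpartition_ftaylorSeries_le_of_ne_atomic a x hA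
      (ne_of_mem_erase hc)).trans ?_)
  rw [nsmul_eq_mul]
  gcongr
  exact_mod_cast card_le_univ _

end ChainRule

theorem chain_rule_remainder_general (d n : ℕ) (hn : 1 ≤ n)
    (w : Fin n → Fin d) :
    ∃ C : ℝ, 0 < C ∧
      ∀ (H₀ : EuclideanSpace ℝ (Fin d) → ℝ)
        (A₀ : EuclideanSpace ℝ (Fin d) → EuclideanSpace ℝ (Fin d))
        (lam : ℝ) (x : EuclideanSpace ℝ (Fin d)),
        ContDiff ℝ n H₀ → ContDiff ℝ n A₀ →
        |iteratedFDeriv ℝ n (fun y => H₀ (lam • y + A₀ y)) x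
              (fun j => EuclideanSpace.single (w j) (1 : ℝ))
          - iteratedFDeriv ℝ n H₀ (lam • x + A₀ x)
              (fun j => EuclideanSpace.single (w j) (1 : ℝ)) * lam ^ n|
          ≤ C * (‖iteratedFDeriv ℝ n H₀ (lam • x + A₀ x)‖ * ‖fderiv ℝ A₀ x‖
                  * (|lam| + ‖fderiv ℝ A₀ x‖) ^ (n - 1)
              + ∑ k ∈ Finset.Ico 1 n, ∑ j ∈ Finset.range k, ∑ i ∈ Finset.Icc 2 (n - j),
                  ‖iteratedFDeriv ℝ k H₀ (lam • x + A₀ x)‖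
                    * (|lam| + ‖fderiv ℝ A₀ x‖) ^ j
                    * ‖iteratedFDeriv ℝ i A₀ x‖ ^ (((n : ℝ) - j) / i)) := by
  refine ⟨n + Fintype.card (OrderedFinpartition n),
    add_pos_of_pos_of_nonneg (by exact_mod_cast hn) (Nat.cast_nonneg _),
    fun H₀ A₀ lam x hH hA => ?_⟩
  set e : Fin n → EuclideanSpace ℝ (Fin d) := fun j => EuclideanSpace.single (w j) 1
  set D := iteratedFDeriv ℝ n (fun y => H₀ (lam • y + A₀ y)) x -
    lam ^ n • iteratedFDeriv ℝ n H₀ (lam • x + A₀ x)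
  have hDe : D e = iteratedFDeriv ℝ n (fun y => H₀ (lam • y + A₀ y)) x e -
      iteratedFDeriv ℝ n H₀ (lam • x + A₀ x) e * lam ^ n := by
    simp [D, mul_comm]
  have hD : |D e| ≤ ‖D‖ := by
    simpa [e] using D.le_opNorm e
  rw [← hDe]
  refine hD.trans ((norm_iteratedFDeriv_comp_smul_id_add_sub_le lam x hn hH hA).trans ?_)
  rw [mul_add]
  gcongr <;> simp

/-- polynomial chain-rule remainder estimate (Lemma 7.1 of the paper).
The multi-index `γ` with `|γ| = n ≥ 1` is encoded by a map `w : Fin n → Fin d`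
listing the coordinate directions with multiplicities (`γ i = #{j | w j = i}`), and
`∂_x^γ f x = D^n f x (e_{w 0}, …, e_{w (n-1)})` via the iterated derivative. -/
theorem chain_rule_remainder (d n : ℕ) (hn : 1 ≤ n) (γ : Fin d → ℕ)
    (w : Fin n → Fin d)
    (hw : ∀ i : Fin d, γ i = (Finset.univ.filter fun j => w j = i).card) :
    ∃ C : ℝ, 0 < C ∧
      ∀ (H₀ : EuclideanSpace ℝ (Fin d) → ℝ)
        (A₀ : EuclideanSpace ℝ (Fin d) → EuclideanSpace ℝ (Fin d))
        (lam : ℝ) (x : EuclideanSpace ℝ (Fin d)),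
        ContDiff ℝ n H₀ → ContDiff ℝ n A₀ →
        |iteratedFDeriv ℝ n (fun y => H₀ (lam • y + A₀ y)) x
              (fun j => EuclideanSpace.single (w j) (1 : ℝ))
          - iteratedFDeriv ℝ n H₀ (lam • x + A₀ x)
              (fun j => EuclideanSpace.single (w j) (1 : ℝ)) * lam ^ n|
          ≤ C * (‖iteratedFDeriv ℝ n H₀ (lam • x + A₀ x)‖ * ‖fderiv ℝ A₀ x‖
                  * (|lam| + ‖fderiv ℝ A₀ x‖) ^ (n - 1)
              + ∑ k ∈ Finset.Ico 1 n, ∑ j ∈ Finset.range k, ∑ i ∈ Finset.Icc 2 (n - j),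
                  ‖iteratedFDeriv ℝ k H₀ (lam • x + A₀ x)‖
                    * (|lam| + ‖fderiv ℝ A₀ x‖) ^ j
                    * ‖iteratedFDeriv ℝ i A₀ x‖ ^ (((n : ℝ) - j) / i)) :=
  chain_rule_remainder_general d n hn w
end
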